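/- arXiv:1005.2871 — 2 statements merged into one kernel-verified Lean document; each statement's English description precedes it below -/
import Mathlib

section
/- Let d₁, d₂ ≥ 2 be coprime natural numbers and let H = ⟨d₁, d₂⟩ ⊆ ℕ be the numerical semigroup they generate. Then the number of gaps of H (natural numbers not in H) equals (d₁ - 1)(d₂ - 1)/2. -/
private lemma sylv_key (d₁ d₂ a b n : ℤ) (hd₁ : 0 < d₁) (hd₂ : 0 < d₂)
    (hcop : IsCoprime d₁ d₂) (ha : 0 ≤ a) (ha' : a < d₂) (h : a * d₁ + b * d₂ = n) :
    (∃ x y : ℤ, 0 ≤ x ∧ 0 ≤ y ∧ x * d₁ + y * d₂ = n) ↔ 0 ≤ b := by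
  constructor
  · rintro ⟨x, y, hx, hy, hxy⟩
    have hdvd : d₂ ∣ (x - a) * d₁ := ⟨b - y, by linear_combination hxy - h⟩
    obtain ⟨k, hk⟩ := hcop.symm.dvd_of_dvd_mul_right hdvd
    have hk0 : 0 ≤ k := by nlinarith
    have hy' : y * d₂ = (b - k * d₁) * d₂ := by linear_combination hxy - h - d₁ * hk
    have hy2 : y = b - k * d₁ := mul_right_cancel₀ (ne_of_gt hd₂) hy'
    nlinarith [mul_nonneg hk0 hd₁.le]
  · intro hb
    exact ⟨a, b, ha, hb, h⟩

private lemma sylv_sym (d₁ d₂ : ℤ) (hd₁ : 0 < d₁) (hd₂ : 0 < d₂)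
    (hcop : IsCoprime d₁ d₂) (n : ℤ) :
    (∃ x y : ℤ, 0 ≤ x ∧ 0 ≤ y ∧ x * d₁ + y * d₂ = n) ↔
    ¬ (∃ x y : ℤ, 0 ≤ x ∧ 0 ≤ y ∧ x * d₁ + y * d₂ = d₁ * d₂ - d₁ - d₂ - n) := by
  obtain ⟨u, v, huv⟩ := hcop
  set a := (n * u) % d₂ with hadef
  set k := (n * u) / d₂ with hkdef
  set b := n * v + k * d₁ with hbdef
  have ha : 0 ≤ a := Int.emod_nonneg _ (ne_of_gt hd₂)
  have ha' : a < d₂ := Int.emod_lt_of_pos _ hd₂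
  have hmod : d₂ * k + a = n * u := Int.mul_ediv_add_emod (n * u) d₂
  have heq : a * d₁ + b * d₂ = n := by linear_combination d₁ * hmod + n * huv
  have heq2 : (d₂ - 1 - a) * d₁ + (-1 - b) * d₂ = d₁ * d₂ - d₁ - d₂ - n := by
    linear_combination -heq
  rw [sylv_key d₁ d₂ a b n hd₁ hd₂ ⟨u, v, huv⟩ ha ha' heq,
    sylv_key d₁ d₂ (d₂ - 1 - a) (-1 - b) _ hd₁ hd₂ ⟨u, v, huv⟩ (by omega) (by omega) heq2]
  omega

/-- **Sylvester.** For coprime `d₁, d₂ ≥ 2`, the number of gaps (natural numbers not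
representable as `a·d₁ + b·d₂` with `a, b ∈ ℕ`) of the numerical semigroup `⟨d₁, d₂⟩`
equals `(d₁-1)(d₂-1)/2`. -/
theorem stmt1 (d₁ d₂ : ℕ) (h₁ : 2 ≤ d₁) (h₂ : 2 ≤ d₂) (hcop : Nat.gcd d₁ d₂ = 1) :
    Set.ncard {n : ℕ | ¬ ∃ a b : ℕ, a * d₁ + b * d₂ = n} = (d₁ - 1) * (d₂ - 1) / 2 := by
  classical
  have hd1 : (0 : ℤ) < d₁ := by exact_mod_cast lt_of_lt_of_le (by norm_num) h₁
  have hd2 : (0 : ℤ) < d₂ := by exact_mod_cast lt_of_lt_of_le (by norm_num) h₂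
  have hcopZ : IsCoprime (d₁ : ℤ) (d₂ : ℤ) := by
    rw [Int.isCoprime_iff_gcd_eq_one, Int.gcd_natCast_natCast]; exact hcop
  -- basic arithmetic on F
  have hmul : d₁ + d₂ ≤ d₁ * d₂ := by nlinarith
  set F : ℕ := d₁ * d₂ - d₁ - d₂ with hFdef
  have hFadd : F + d₁ + d₂ = d₁ * d₂ := by
    set m := d₁ * d₂ with hm; omega
  have hFZ : (F : ℤ) = d₁ * d₂ - d₁ - d₂ := by
    have : (F : ℤ) + d₁ + d₂ = d₁ * d₂ := by exact_mod_cast congrArg (Nat.cast : ℕ → ℤ) hFadd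
    linarith
  have hN : F + 1 = (d₁ - 1) * (d₂ - 1) := by
    obtain ⟨p, rfl⟩ : ∃ p, d₁ = p + 2 := ⟨d₁ - 2, by omega⟩
    obtain ⟨q, rfl⟩ : ∃ q, d₂ = q + 2 := ⟨d₂ - 2, by omega⟩
    have e1 : (p + 2) * (q + 2) = p * q + 2 * p + 2 * q + 4 := by ring
    have ha : p + 2 - 1 = p + 1 := by omega
    have hb : q + 2 - 1 = q + 1 := by omega
    have e2 : (p + 2 - 1) * (q + 2 - 1) = p * q + p + q + 1 := by rw [ha, hb]; ring
    set c := p * q with hc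
    omega
  -- ℕ representability ↔ ℤ representability
  have hPR : ∀ n : ℕ, (∃ a b : ℕ, a * d₁ + b * d₂ = n) ↔
      (∃ x y : ℤ, 0 ≤ x ∧ 0 ≤ y ∧ x * d₁ + y * d₂ = (n : ℤ)) := by
    intro n
    constructor
    · rintro ⟨a, b, hab⟩
      exact ⟨a, b, Int.natCast_nonneg a, Int.natCast_nonneg b, by exact_mod_cast hab⟩
    · rintro ⟨x, y, hx, hy, hxy⟩
      refine ⟨x.toNat, y.toNat, ?_⟩
      have : ((x.toNat * d₁ + y.toNat * d₂ : ℕ) : ℤ) = (n : ℤ) := by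
        push_cast [Int.toNat_of_nonneg hx, Int.toNat_of_nonneg hy]
        exact hxy
      exact_mod_cast this
  -- beyond F everything is representable
  have hbig : ∀ n : ℕ, F < n → ∃ a b : ℕ, a * d₁ + b * d₂ = n := by
    intro n hn
    rw [hPR]
    rw [sylv_sym (d₁ : ℤ) d₂ hd1 hd2 hcopZ]
    rintro ⟨x, y, hx, hy, hxy⟩
    have : (0 : ℤ) ≤ x * d₁ + y * d₂ := by positivity
    have hlt : ((d₁ : ℤ) * d₂ - d₁ - d₂ - n) < 0 := by
      have : (F : ℤ) < n := by exact_mod_cast hn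
      linarith [hFZ]
    omega
  -- the symmetry over ℕ
  have hsymN : ∀ n : ℕ, n ≤ F →
      ((∃ a b : ℕ, a * d₁ + b * d₂ = n) ↔ ¬ (∃ a b : ℕ, a * d₁ + b * d₂ = F - n)) := by
    intro n hn
    rw [hPR, hPR, sylv_sym (d₁ : ℤ) d₂ hd1 hd2 hcopZ]
    have : ((F - n : ℕ) : ℤ) = (d₁ : ℤ) * d₂ - d₁ - d₂ - n := by
      push_cast [Nat.cast_sub hn]; linarith [hFZ]
    rw [this]
  -- reduce to a finset computation
  set N := F + 1 with hNdef
  have hset : {n : ℕ | ¬ ∃ a b : ℕ, a * d₁ + b * d₂ = n} =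
      ↑((Finset.range N).filter fun n => ¬ ∃ a b : ℕ, a * d₁ + b * d₂ = n) := by
    ext n
    simp only [Set.mem_setOf_eq, Finset.coe_filter, Finset.mem_range]
    constructor
    · intro h
      refine ⟨?_, h⟩
      by_contra h'
      exact h (hbig n (by omega))
    · exact fun h => h.2
  rw [hset, Set.ncard_coe_finset]
  -- bijection between gaps and representables in range N
  have hcard : ((Finset.range N).filter fun n => ¬ ∃ a b : ℕ, a * d₁ + b * d₂ = n).card =
      ((Finset.range N).filter fun n => ∃ a b : ℕ, a * d₁ + b * d₂ = n).card := by
    apply Finset.card_bij' (fun n _ => F - n) (fun n _ => F - n)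
    · intro n hn
      simp only [Finset.mem_filter, Finset.mem_range] at hn ⊢
      have hle : n ≤ F := by omega
      exact ⟨by omega, of_not_not (fun hrep => hn.2 ((hsymN n hle).mpr hrep))⟩
    · intro n hn
      simp only [Finset.mem_filter, Finset.mem_range] at hn ⊢
      have hle : n ≤ F := by omega
      exact ⟨by omega, (hsymN n hle).mp hn.2⟩
    · intro n hn
      simp only [Finset.mem_filter, Finset.mem_range] at hn
      omega
    · intro n hn
      simp only [Finset.mem_filter, Finset.mem_range] at hn
      omega
  have htotal := Finset.card_filter_add_card_filter_not
    (s := Finset.range N) (p := fun n => ∃ a b : ℕ, a * d₁ + b * d₂ = n)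
  rw [Finset.card_range] at htotal
  omega
end

section
/- Let n = p^h be a prime power and set α₁ = n³ - n² + n, α₂ = n³, α₃ = n³ + 1, and g = ((n³+1)(n²-2) + 2)/2. Then 2g - 1 = -α₁ + (n²-n)α₂ + (n-1)α₃, and 2g - 1 cannot be written as j₁α₁ + j₂α₂ + j₃α₃ with nonnegative integers j₁, j₂ ≤ n² - n and j₃ ≤ n - 1. -/
/-- The key computation for the Giulietti–Korchmáros curve: with `n = p^h`,
`α₁ = n³ - n² + n`, `α₂ = n³`, `α₃ = n³ + 1` and `2g = (n³+1)(n²-2) + 2`, one has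
`2g - 1 = -α₁ + (n²-n)α₂ + (n-1)α₃`, and `2g - 1` admits no representation
`j₁α₁ + j₂α₂ + j₃α₃` with nonnegative integers `j₁, j₂ ≤ n² - n`, `j₃ ≤ n - 1`. -/
theorem stmt15 (p h n g : ℕ) (hp : p.Prime) (hh : 1 ≤ h) (hn : n = p ^ h)
    (hg : 2 * g = (n ^ 3 + 1) * (n ^ 2 - 2) + 2) :
    (2 * (g : ℤ) - 1 =
      -((n : ℤ) ^ 3 - (n : ℤ) ^ 2 + n) + ((n : ℤ) ^ 2 - n) * (n : ℤ) ^ 3 +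
        ((n : ℤ) - 1) * ((n : ℤ) ^ 3 + 1)) ∧
    ¬ ∃ j₁ j₂ j₃ : ℕ, j₁ ≤ n ^ 2 - n ∧ j₂ ≤ n ^ 2 - n ∧ j₃ ≤ n - 1 ∧
      (j₁ : ℤ) * ((n : ℤ) ^ 3 - (n : ℤ) ^ 2 + n) + (j₂ : ℤ) * (n : ℤ) ^ 3 +
        (j₃ : ℤ) * ((n : ℤ) ^ 3 + 1) = 2 * (g : ℤ) - 1 := by
  have hn2 : 2 ≤ n := by
    calc 2 = 2 ^ 1 := (pow_one 2).symm
    _ ≤ 2 ^ h := Nat.pow_le_pow_right (by norm_num) hh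
    _ ≤ p ^ h := Nat.pow_le_pow_left hp.two_le h
    _ = n := hn.symm
  have hsq : 2 ≤ n ^ 2 := by nlinarith
  have hns : n ≤ n ^ 2 := by nlinarith
  have hn1 : 1 ≤ n := by omega
  zify [hsq] at hg
  have hm : (2 : ℤ) ≤ (n : ℤ) := by exact_mod_cast hn2
  set m : ℤ := (n : ℤ) with hmdef
  constructor
  · linear_combination hg
  · rintro ⟨j₁, j₂, j₃, h1, h2, h3, heq⟩
    zify [hns] at h1 h2
    zify [hn1] at h3
    have heq' : (j₁ : ℤ) * (m ^ 3 - m ^ 2 + m) + (j₂ : ℤ) * m ^ 3 +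
        (j₃ : ℤ) * (m ^ 3 + 1) = m ^ 5 - 2 * m ^ 3 + m ^ 2 - 1 := by
      linear_combination heq + hg
    have d1 : m ∣ ((j₃ : ℤ) + 1) := by
      refine ⟨m ^ 4 - 2 * m ^ 2 + m - (j₁ : ℤ) * (m ^ 2 - m + 1) - (j₂ : ℤ) * m ^ 2
        - (j₃ : ℤ) * m ^ 2, ?_⟩
      linear_combination heq'
    have hj3pos : (0 : ℤ) < (j₃ : ℤ) + 1 := by positivity
    have hle := Int.le_of_dvd hj3pos d1
    have hj3 : (j₃ : ℤ) = m - 1 := by omega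
    rw [hj3] at heq'
    have hm0 : m ≠ 0 := by omega
    have heq2 : (j₁ : ℤ) * (m ^ 2 - m + 1) + (j₂ : ℤ) * m ^ 2
        = m ^ 4 - m ^ 3 - m ^ 2 + m - 1 := by
      have : m * ((j₁ : ℤ) * (m ^ 2 - m + 1) + (j₂ : ℤ) * m ^ 2)
          = m * (m ^ 4 - m ^ 3 - m ^ 2 + m - 1) := by linear_combination heq'
      exact mul_left_cancel₀ hm0 this
    have d2 : m ^ 2 ∣ (m - 1) * ((j₁ : ℤ) + 1) := by
      refine ⟨(j₁ : ℤ) + (j₂ : ℤ) + 1 + m - m ^ 2, ?_⟩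
      linear_combination -heq2
    have cop : IsCoprime (m ^ 2) (m - 1) := ⟨1, -(m + 1), by ring⟩
    have d3 : m ^ 2 ∣ ((j₁ : ℤ) + 1) := cop.dvd_of_dvd_mul_left d2
    have hj1pos : (0 : ℤ) < (j₁ : ℤ) + 1 := by positivity
    have := Int.le_of_dvd hj1pos d3
    nlinarith
end
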